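/- arXiv:2507.19918 — 4 statements merged into one kernel-verified Lean document; each statement's English description precedes it below -/
import Mathlib

section
/- For any square complex matrix A and any unit vector x, equality |x*Ax|² = ‖Ax‖² holds if and only if x is an eigenvector of A. Consequently, DW(A) ∩ {(z,ν) : |z|² = ν} = {(λ, |λ|²) : λ an eigenvalue of A}. -/
/-! For a unit vector `x`, Cauchy–Schwarz gives `‖⟪x, y⟫‖ ≤ ‖y‖`, with equality exactly when
`y ∈ 𝕜 ∙ x`. Taking `y = T x` characterizes eigenvectors, and an eigenvector `x` with eigenvalue
`μ` contributes the point `(⟪x, T x⟫, ‖T x‖²) = (μ, |μ|²)` on the paraboloid. -/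

open Matrix

noncomputable def dwShell {n : ℕ} (A : Matrix (Fin n) (Fin n) ℂ) : Set (ℂ × ℝ) :=
  {p | ∃ x : EuclideanSpace ℂ (Fin n), ‖x‖ = 1 ∧
    p = ((inner ℂ x (Matrix.toEuclideanLin A x) : ℂ), ‖Matrix.toEuclideanLin A x‖ ^ 2)}

section InnerProductSpace

variable {𝕜 E : Type*} [RCLike 𝕜] [NormedAddCommGroup E] [InnerProductSpace 𝕜 E]

theorem inner_smul_right_of_norm_eq_one {x : E} (hx : ‖x‖ = 1) (μ : 𝕜) :
    inner 𝕜 x (μ • x) = μ := by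
  rw [inner_smul_right, inner_self_eq_one_of_norm_eq_one hx, mul_one]

theorem norm_inner_eq_norm_iff_exists_smul_of_norm_eq_one {x : E} (hx : ‖x‖ = 1) (y : E) :
    ‖inner 𝕜 x y‖ = ‖y‖ ↔ ∃ μ : 𝕜, y = μ • x := by
  have hx₀ : x ≠ 0 := ne_zero_of_norm_ne_zero (hx ▸ one_ne_zero)
  have h := (norm_inner_eq_norm_tfae 𝕜 x y).out 0 2
  rwa [hx, one_mul, or_iff_right hx₀] at h

theorem sq_norm_inner_eq_sq_norm_apply_iff {x : E} (hx : ‖x‖ = 1) (T : E →ₗ[𝕜] E) :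
    ‖inner 𝕜 x (T x)‖ ^ 2 = ‖T x‖ ^ 2 ↔ ∃ μ : 𝕜, T x = μ • x := by
  rw [sq_eq_sq₀ (norm_nonneg _) (norm_nonneg _)]
  exact norm_inner_eq_norm_iff_exists_smul_of_norm_eq_one hx (T x)

theorem mem_spectrum_iff_exists_norm_eq_one_apply_eq_smul [FiniteDimensional 𝕜 E]
    (T : E →ₗ[𝕜] E) (μ : 𝕜) :
    μ ∈ spectrum 𝕜 T ↔ ∃ x : E, ‖x‖ = 1 ∧ T x = μ • x := by
  rw [← Module.End.hasEigenvalue_iff_mem_spectrum]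
  constructor
  · intro hμ
    obtain ⟨y, hy⟩ := hμ.exists_hasEigenvector
    refine ⟨(‖y‖⁻¹ : 𝕜) • y, norm_smul_inv_norm hy.2, ?_⟩
    rw [map_smul, hy.apply_eq_smul, smul_comm]
  · rintro ⟨x, hx, hTx⟩
    exact Module.End.hasEigenvalue_of_hasEigenvector
      ⟨Module.End.mem_eigenspace_iff.2 hTx, ne_zero_of_norm_ne_zero (hx ▸ one_ne_zero)⟩

theorem numericalShell_inter_paraboloid [FiniteDimensional 𝕜 E] (T : E →ₗ[𝕜] E) :
    {p : 𝕜 × ℝ | ∃ x : E, ‖x‖ = 1 ∧ p = (inner 𝕜 x (T x), ‖T x‖ ^ 2)} ∩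
        {p : 𝕜 × ℝ | ‖p.1‖ ^ 2 = p.2} =
      {p : 𝕜 × ℝ | ∃ μ ∈ spectrum 𝕜 T, p = (μ, ‖μ‖ ^ 2)} := by
  have point_eq {x : E} (hx : ‖x‖ = 1) {μ : 𝕜} (hTx : T x = μ • x) :
      ((inner 𝕜 x (T x), ‖T x‖ ^ 2) : 𝕜 × ℝ) = (μ, ‖μ‖ ^ 2) := by
    rw [hTx, inner_smul_right_of_norm_eq_one hx, norm_smul, hx, mul_one]
  ext p
  constructor
  · rintro ⟨⟨x, hx, rfl⟩, hp⟩
    obtain ⟨μ, hTx⟩ := (sq_norm_inner_eq_sq_norm_apply_iff hx T).1 hp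
    exact ⟨μ, (mem_spectrum_iff_exists_norm_eq_one_apply_eq_smul T μ).2 ⟨x, hx, hTx⟩,
      point_eq hx hTx⟩
  · rintro ⟨μ, hμ, rfl⟩
    obtain ⟨x, hx, hTx⟩ := (mem_spectrum_iff_exists_norm_eq_one_apply_eq_smul T μ).1 hμ
    exact ⟨⟨x, hx, (point_eq hx hTx).symm⟩, rfl⟩

end InnerProductSpace

/-- Equality |x*Ax|² = ‖Ax‖² holds iff x is an eigenvector of A; consequently
DW(A) ∩ {(z,ν) : |z|² = ν} = {(λ,|λ|²) : λ ∈ Λ(A)}. -/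
theorem stmt1 {n : ℕ} (A : Matrix (Fin n) (Fin n) ℂ) :
    (∀ x : EuclideanSpace ℂ (Fin n), ‖x‖ = 1 →
      (‖(inner ℂ x (Matrix.toEuclideanLin A x) : ℂ)‖ ^ 2 =
          ‖Matrix.toEuclideanLin A x‖ ^ 2 ↔
        ∃ μ : ℂ, Matrix.toEuclideanLin A x = μ • x)) ∧
    dwShell A ∩ {p : ℂ × ℝ | ‖p.1‖ ^ 2 = p.2} =
      {p : ℂ × ℝ | ∃ μ ∈ spectrum ℂ A, p = (μ, ‖μ‖ ^ 2)} :=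
  ⟨fun _ hx => sq_norm_inner_eq_sq_norm_apply_iff hx _, by
    rw [← spectrum_toLpLin (p := 2)]
    exact numericalShell_inter_paraboloid _⟩
end

section
/- If A ∈ ℂ^{n×n} is invertible, then DW(A⁻¹) is the image of DW(A) under the map f_inv(z,ν) := (conj(z)/ν, 1/ν). (Note that for invertible A, every point (z,ν) ∈ DW(A) has ν = ‖Ax‖² > 0.) -/
open Matrix

noncomputable def finv (p : ℂ × ℝ) : ℂ × ℝ :=
  ((starRingEnd ℂ p.1) / (p.2 : ℂ), 1 / p.2)

/-! If `S` inverts `T` and `‖x‖ = 1`, the unit vector `y = T x / ‖T x‖` satisfies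
`S y = x / ‖T x‖`, hence `⟪y, S y⟫ = conj ⟪x, T x⟫ / ‖T x‖²` and `‖S y‖² = 1 / ‖T x‖²`.
So `finv` maps the shell of `T` into that of `S`; the reverse inclusion follows by exchanging
`S` and `T`, since `finv` is an involution away from `ν = 0`. -/

lemma finv_finv {p : ℂ × ℝ} (hp : p.2 ≠ 0) : finv (finv p) = p := by
  have hpc : (p.2 : ℂ) ≠ 0 := by exact_mod_cast hp
  ext
  · simp only [finv, map_div₀, Complex.conj_conj, Complex.conj_ofReal, one_div,
      Complex.ofReal_inv]
    field_simp
  · simp [finv]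

def davisWielandtShell {E : Type*} [NormedAddCommGroup E] [InnerProductSpace ℂ E]
    (T : E →ₗ[ℂ] E) : Set (ℂ × ℝ) :=
  {p | ∃ x : E, ‖x‖ = 1 ∧ p = (inner ℂ x (T x), ‖T x‖ ^ 2)}

namespace davisWielandtShell

variable {E : Type*} [NormedAddCommGroup E] [InnerProductSpace ℂ E] {S T : E →ₗ[ℂ] E}

lemma snd_ne_zero (hST : ∀ x, S (T x) = x) {p : ℂ × ℝ} (hp : p ∈ davisWielandtShell T) :
    p.2 ≠ 0 := by
  obtain ⟨x, hx, rfl⟩ := hp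
  have hx0 : x ≠ 0 := norm_ne_zero_iff.1 (by simp [hx])
  have hTx : T x ≠ 0 := fun h => hx0 (by rw [← hST x, h, map_zero])
  exact pow_ne_zero 2 (norm_ne_zero_iff.2 hTx)

lemma finv_mem (hST : ∀ x, S (T x) = x) {p : ℂ × ℝ} (hp : p ∈ davisWielandtShell T) :
    finv p ∈ davisWielandtShell S := by
  have hν := snd_ne_zero hST hp
  obtain ⟨x, hx, rfl⟩ := hp
  have hTx : ‖T x‖ ≠ 0 := by simpa using hν
  set c : ℂ := ((‖T x‖ : ℝ) : ℂ)⁻¹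
  have hc : ‖c‖ = ‖T x‖⁻¹ := by simp [c]
  have hconj_mul : starRingEnd ℂ c * c = ((‖T x‖ ^ 2 : ℝ) : ℂ)⁻¹ := by
    simp only [c, map_inv₀, Complex.conj_ofReal]
    push_cast
    ring
  refine ⟨c • T x, by rw [norm_smul, hc, inv_mul_cancel₀ hTx], ?_⟩
  rw [map_smul, hST, inner_smul_left, inner_smul_right, ← mul_assoc, hconj_mul,
    norm_smul, hc, hx]
  ext
  · simp only [finv, inner_conj_symm]
    exact div_eq_inv_mul _ _
  · simp [finv, inv_pow]

theorem eq_image_finv (hST : ∀ x, S (T x) = x) (hTS : ∀ y, T (S y) = y) :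
    davisWielandtShell S = finv '' davisWielandtShell T := by
  refine subset_antisymm (fun p hp => ?_) (Set.image_subset_iff.2 fun p => finv_mem hST)
  exact ⟨finv p, finv_mem hTS hp, finv_finv (snd_ne_zero hTS hp)⟩

end davisWielandtShell

/-- For invertible A, DW(A⁻¹) = f_inv(DW(A)). -/
theorem stmt7 {n : ℕ} (A : Matrix (Fin n) (Fin n) ℂ) (hA : IsUnit A) :
    dwShell A⁻¹ = finv '' dwShell A := by
  have hdet : IsUnit A.det := (Matrix.isUnit_iff_isUnit_det A).mp hA
  refine davisWielandtShell.eq_image_finv (S := toEuclideanLin A⁻¹) (T := toEuclideanLin A)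
    (fun x => ?_) (fun y => ?_)
  · rw [← LinearMap.comp_apply, ← toLpLin_mul_same, nonsing_inv_mul A hdet, toLpLin_one,
      LinearMap.id_apply]
  · rw [← LinearMap.comp_apply, ← toLpLin_mul_same, mul_nonsing_inv A hdet, toLpLin_one,
      LinearMap.id_apply]
end

section
/- Given A, B ∈ ℂ^{n×n}, if there exists a unitary U such that I + A U* B U is singular, then the inverse DW shell of A intersects DW(−B); i.e., there exists (w,μ) ∈ ℂ × ℝ₊ lying in both f_inv(DW(A) \ {(0,0)}) and DW(−B). -/
open Matrix

noncomputable def invDwShell {n : ℕ} (A : Matrix (Fin n) (Fin n) ℂ) : Set (ℂ × ℝ) :=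
  finv '' (dwShell A \ {((0 : ℂ), (0 : ℝ))})

/-! If `(1 - a b) y = 0` with `‖y‖ = 1`, then `b y ≠ 0` and the unit vector `x = b y / ‖b y‖`
satisfies `a x = y / ‖b y‖`; a direct computation shows that `f_inv` sends the DW point of `a` at `x`
to the DW point of `b` at `y`. Taking `a = A` and `b = U* (-B) U`, the latter lies in `DW(-B)`
because conjugation by a unitary only moves the unit vector `y` to `U y`. -/

open ComplexConjugate
open scoped InnerProductSpace

lemma ContinuousLinearMap.exists_norm_eq_one_apply_eq_zero_of_not_isUnit {𝕜 E : Type*}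
    [RCLike 𝕜] [NormedAddCommGroup E] [NormedSpace 𝕜 E] [FiniteDimensional 𝕜 E]
    {T : E →L[𝕜] E} (hT : ¬IsUnit T) : ∃ y : E, ‖y‖ = 1 ∧ T y = 0 := by
  have := FiniteDimensional.complete 𝕜 E
  contrapose! hT
  have hinj : Function.Injective T := by
    refine (injective_iff_map_eq_zero T).2 fun y hy => ?_
    by_contra hy0
    refine hT ((‖y‖⁻¹ : 𝕜) • y) (norm_smul_inv_norm hy0) ?_
    rw [map_smul, hy, smul_zero]
  exact T.isUnit_iff_bijective.2 ⟨hinj, LinearMap.injective_iff_surjective.1 hinj⟩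

lemma notMem_singleton_of_finv_snd_pos {p : ℂ × ℝ} (hp : 0 < (finv p).2) :
    p ∉ ({((0 : ℂ), (0 : ℝ))} : Set (ℂ × ℝ)) := by
  rintro rfl
  simp [finv] at hp

section

variable {E : Type*} [NormedAddCommGroup E] [InnerProductSpace ℂ E]

noncomputable def dwPoint (T : E →L[ℂ] E) (x : E) : ℂ × ℝ :=
  (⟪x, T x⟫_ℂ, ‖T x‖ ^ 2)

lemma dwPoint_mem_dwShell {n : ℕ} (M : Matrix (Fin n) (Fin n) ℂ) {x : EuclideanSpace ℂ (Fin n)}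
    (hx : ‖x‖ = 1) : dwPoint (toEuclideanCLM (𝕜 := ℂ) M) x ∈ dwShell M :=
  ⟨x, hx, rfl⟩

lemma apply_ne_zero_of_apply_apply_eq (a b : E →L[ℂ] E) {y : E} (hy : y ≠ 0)
    (h : a (b y) = y) : b y ≠ 0 := by
  intro hby
  rw [hby, map_zero] at h
  exact hy h.symm

lemma finv_dwPoint_of_apply_apply_eq (a b : E →L[ℂ] E) {y : E} (hy : ‖y‖ = 1)
    (h : a (b y) = y) : finv (dwPoint a ((‖b y‖⁻¹ : ℂ) • b y)) = dwPoint b y := by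
  have hr : (‖b y‖ : ℂ) ≠ 0 := by
    simpa using apply_ne_zero_of_apply_apply_eq a b (norm_ne_zero_iff.1 (hy ▸ one_ne_zero)) h
  have hconj : conj ⟪b y, y⟫_ℂ = ⟪y, b y⟫_ℂ := inner_conj_symm _ _
  simp only [dwPoint, finv, map_smul, h, inner_smul_left, inner_smul_right, norm_smul, hy,
    map_mul, hconj, map_inv₀, Complex.conj_ofReal, norm_inv, Complex.norm_real, norm_norm]
  refine Prod.ext ?_ ?_
  · push_cast
    field_simp
  · field_simp

variable [CompleteSpace E]

lemma dwPoint_star_mul_mul_of_mem_unitary {u : E →L[ℂ] E} (hu : u ∈ unitary (E →L[ℂ] E))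
    (T : E →L[ℂ] E) (x : E) : dwPoint (star u * T * u) x = dwPoint T (u x) := by
  simp only [dwPoint, mul_apply_eq_comp,
    ContinuousLinearMap.norm_map_of_mem_unitary (Unitary.star_mem hu)]
  rw [ContinuousLinearMap.star_eq_adjoint, ContinuousLinearMap.adjoint_inner_right]

end

/-- If I + AU*BU is singular for some unitary U, then DW⁻¹(A) intersects DW(−B). -/
theorem stmt8 {n : ℕ} (A B : Matrix (Fin n) (Fin n) ℂ)
    (h : ∃ U : Matrix (Fin n) (Fin n) ℂ, Uᴴ * U = 1 ∧ ¬ IsUnit (1 + A * Uᴴ * B * U)) :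
    ∃ p : ℂ × ℝ, 0 < p.2 ∧ p ∈ invDwShell A ∧ p ∈ dwShell (-B) := by
  obtain ⟨U, hU, hsing⟩ := h
  set u := toEuclideanCLM (𝕜 := ℂ) U
  have hu : u ∈ unitary _ := Unitary.map_mem _ (mem_unitaryGroup_iff'.2 hU)
  set a := toEuclideanCLM (𝕜 := ℂ) A
  set b := star u * toEuclideanCLM (𝕜 := ℂ) (-B) * u
  have hab : toEuclideanCLM (𝕜 := ℂ) (1 + A * Uᴴ * B * U) = 1 - a * b := by
    rw [show 1 + A * Uᴴ * B * U = 1 - A * (star U * -B * U) by noncomm_ring]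
    simp only [map_sub, map_one, map_mul, map_star, a, b, u]
  obtain ⟨y, hy, hy0⟩ := ContinuousLinearMap.exists_norm_eq_one_apply_eq_zero_of_not_isUnit
    (T := 1 - a * b) (by rwa [← hab, isUnit_map_iff])
  have hyab : a (b y) = y := by
    rw [← mul_apply_eq_comp, eq_comm, ← sub_eq_zero]
    exact hy0
  have hby := apply_ne_zero_of_apply_apply_eq a b (norm_ne_zero_iff.1 (hy ▸ one_ne_zero)) hyab
  have hfinv := finv_dwPoint_of_apply_apply_eq a b hy hyab
  have hpos : 0 < (dwPoint b y).2 := pow_pos (norm_pos_iff.2 hby) 2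
  refine ⟨dwPoint b y, hpos, ⟨_, ⟨dwPoint_mem_dwShell A (norm_smul_inv_norm hby),
    notMem_singleton_of_finv_snd_pos (hfinv ▸ hpos)⟩, hfinv⟩, ?_⟩
  rw [dwPoint_star_mul_mul_of_mem_unitary hu]
  exact dwPoint_mem_dwShell _ (by rw [ContinuousLinearMap.norm_map_of_mem_unitary hu, hy])
end

section
/- Given A, B ∈ ℂ^{n×n}, if DW⁻¹(A) ∩ DW(−B) ≠ ∅, then there exists a unitary matrix U such that I + A U* B U is singular. -/
/-!
A common point gives unit vectors `x`, `y` such that, with `a = A x`, `α = ‖a‖` and `b = B y`,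
the pairs `(a, x)` and `(α • y, -(α • b))` have the same Gram matrix: this is exactly what the
two coordinates of `f_inv` encode. Hence some unitary `U` maps the first pair to the second, and then
`(1 + A Uᴴ B U) a = a + A Uᴴ (α • b) = a - A x = 0` with `a ≠ 0`.
-/

open Matrix

open scoped InnerProductSpace

section
variable {𝕜 E : Type*} [RCLike 𝕜] [NormedAddCommGroup E] [InnerProductSpace 𝕜 E]

theorem norm_linearCombination_eq_of_gram_eq {ι : Type*} [Fintype ι] {v w : ι → E}
    (h : gram 𝕜 v = gram 𝕜 w) (c : ι → 𝕜) :
    ‖Fintype.linearCombination 𝕜 v c‖ = ‖Fintype.linearCombination 𝕜 w c‖ := by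
  have := star_dotProduct_gram_mulVec (𝕜 := 𝕜) v c c
  rw [h, star_dotProduct_gram_mulVec] at this
  rw [Fintype.linearCombination_apply, Fintype.linearCombination_apply,
    norm_eq_sqrt_re_inner (𝕜 := 𝕜), norm_eq_sqrt_re_inner (𝕜 := 𝕜), this]

theorem LinearIsometryEquiv.exists_apply_eq_of_gram_eq [FiniteDimensional 𝕜 E] {ι : Type*}
    [Fintype ι] {v w : ι → E} (h : gram 𝕜 v = gram 𝕜 w) :
    ∃ e : E ≃ₗᵢ[𝕜] E, ∀ i, e (v i) = w i := by
  classical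
  set g := Fintype.linearCombination 𝕜 v
  set f := Fintype.linearCombination 𝕜 w
  have hfg (c : ι → 𝕜) : ‖f c‖ = ‖g c‖ := (norm_linearCombination_eq_of_gram_eq h c).symm
  obtain ⟨s, hs⟩ := g.rangeRestrict.exists_rightInverse_of_surjective g.range_rangeRestrict
  have hgs (z : LinearMap.range g) : g (s z) = z := congrArg Subtype.val (LinearMap.congr_fun hs z)
  let L : LinearMap.range g →ₗᵢ[𝕜] E :=
    { f ∘ₗ s with norm_map' := fun z => by simp [hfg, hgs] }
  -- `‖f c‖ = ‖g c‖` forces `ker g ≤ ker f`, so `f ∘ₗ s` does not depend on the choice of `s`.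
  have hL (c : ι → 𝕜) : L ⟨g c, LinearMap.mem_range_self g c⟩ = f c := by
    rw [← sub_eq_zero, ← norm_eq_zero]
    change ‖f (s _) - f c‖ = 0
    rw [← _root_.map_sub f, hfg, _root_.map_sub, hgs, sub_self, norm_zero]
  refine ⟨L.extend.toLinearIsometryEquiv rfl, fun i => ?_⟩
  have hv : g (Pi.single i 1) = v i := by
    rw [Fintype.linearCombination_apply_single, one_smul]
  have hw : f (Pi.single i 1) = w i := by
    rw [Fintype.linearCombination_apply_single, one_smul]
  rw [LinearIsometry.coe_toLinearIsometryEquiv, ← hv, ← hw, ← hL]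
  exact L.extend_apply ⟨_, LinearMap.mem_range_self g _⟩

theorem one_add_mul_star_mul_mul_apply_eq_zero [CompleteSpace E] {S T u : E →L[𝕜] E}
    (hu : u ∈ unitary (E →L[𝕜] E)) {x : E} (hx : u x = -S (u (T x))) :
    (1 + T * star u * S * u) (T x) = 0 := by
  have hSu : S (u (T x)) = -u x := by rw [hx, neg_neg]
  have hstar : star u (u x) = x := congr($(Unitary.star_mul_self_of_mem hu) x)
  simp only [_root_.add_apply, one_apply_eq_self, mul_apply_eq_comp, hSu, map_neg, hstar,
    add_neg_cancel]

theorem exists_mem_unitary_not_isUnit_one_add_mul_star_mul_mul [CompleteSpace E]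
    [FiniteDimensional 𝕜 E]
    {S T : E →L[𝕜] E} {x y : E} (hx : ‖x‖ = 1) (hy : ‖y‖ = 1) (hTx : T x ≠ 0)
    (hinner : ⟪T x, x⟫_𝕜 = -((‖T x‖ ^ 2 : ℝ) : 𝕜) * ⟪y, S y⟫_𝕜)
    (hnorm : ‖T x‖ * ‖S y‖ = 1) :
    ∃ u ∈ unitary (E →L[𝕜] E), ¬IsUnit (1 + T * star u * S * u) := by
  set α : 𝕜 := (‖T x‖ : 𝕜)
  have hgram : gram 𝕜 ![T x, x] = gram 𝕜 ![α • y, -(α • S y)] := by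
    have hinner' : ⟪x, T x⟫_𝕜 = -((‖T x‖ ^ 2 : ℝ) : 𝕜) * ⟪S y, y⟫_𝕜 := by
      rw [← inner_conj_symm, hinner, map_mul, map_neg, RCLike.conj_ofReal, inner_conj_symm]
    ext i j
    fin_cases i <;> fin_cases j <;>
      simp [gram_apply, inner_smul_left, inner_smul_right, α, hinner, hinner',
        inner_self_eq_norm_sq_to_K, hx, hy, norm_smul, hnorm] <;> ring
  obtain ⟨e, he⟩ := LinearIsometryEquiv.exists_apply_eq_of_gram_eq hgram
  set u : unitary (E →L[𝕜] E) := Unitary.linearIsometryEquiv.symm e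
  have hux : (u : E →L[𝕜] E) x = -S ((u : E →L[𝕜] E) (T x)) := by
    have h0 : e (T x) = α • y := he 0
    have h1 : e x = -(α • S y) := he 1
    simp [u, h0, h1]
  refine ⟨u, u.2, fun hunit => hTx ?_⟩
  exact (hunit.smul_eq_zero).mp (one_add_mul_star_mul_mul_apply_eq_zero u.2 hux)

end

theorem exists_of_mem_invDwShell_inter_dwShell_neg {n : ℕ} {A B : Matrix (Fin n) (Fin n) ℂ}
    {p : ℂ × ℝ} (hp : p ∈ invDwShell A ∩ dwShell (-B)) :
    ∃ x y : EuclideanSpace ℂ (Fin n), ‖x‖ = 1 ∧ ‖y‖ = 1 ∧ toEuclideanLin A x ≠ 0 ∧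
      ⟪toEuclideanLin A x, x⟫_ℂ =
        -((‖toEuclideanLin A x‖ ^ 2 : ℝ) : ℂ) * ⟪y, toEuclideanLin B y⟫_ℂ ∧
      ‖toEuclideanLin A x‖ * ‖toEuclideanLin B y‖ = 1 := by
  obtain ⟨⟨q, ⟨⟨x, hx, rfl⟩, hq⟩, rfl⟩, y, hy, hp⟩ := hp
  have hAx : toEuclideanLin A x ≠ 0 := fun hAx => hq (by simp [hAx])
  have hpos : 0 < ‖toEuclideanLin A x‖ ^ 2 := by positivity
  simp only [finv, Prod.ext_iff, map_neg, LinearMap.neg_apply, inner_neg_right, norm_neg] at hp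
  obtain ⟨hinner, hnorm⟩ := hp
  refine ⟨x, y, hx, hy, hAx, ?_, ?_⟩
  · rw [inner_conj_symm, div_eq_iff (by exact_mod_cast hpos.ne')] at hinner
    rw [hinner]
    ring
  · rw [← pow_eq_one_iff_of_nonneg (by positivity) two_ne_zero, mul_pow, ← hnorm]
    field_simp

/-- If DW⁻¹(A) ∩ DW(−B) ≠ ∅, then I + AU*BU is singular for some unitary U. -/
theorem stmt9 {n : ℕ} (A B : Matrix (Fin n) (Fin n) ℂ)
    (h : (invDwShell A ∩ dwShell (-B)).Nonempty) :
    ∃ U : Matrix (Fin n) (Fin n) ℂ, Uᴴ * U = 1 ∧ ¬ IsUnit (1 + A * Uᴴ * B * U) := by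
  obtain ⟨x, y, hx, hy, hAx, hinner, hnorm⟩ :=
    exists_of_mem_invDwShell_inter_dwShell_neg h.some_mem
  let Φ := toEuclideanCLM (n := Fin n) (𝕜 := ℂ)
  obtain ⟨u, hu, hsingular⟩ := exists_mem_unitary_not_isUnit_one_add_mul_star_mul_mul
    (T := Φ A) (S := Φ B) hx hy hAx hinner hnorm
  refine ⟨Φ.symm u, ?_, fun hunit => hsingular ?_⟩
  · simpa [star_eq_conjTranspose] using Unitary.star_mul_self_of_mem (Unitary.map_mem Φ.symm hu)
  · rw [← star_eq_conjTranspose] at hunit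
    simpa only [map_add, map_one, map_mul, map_star, StarAlgEquiv.apply_symm_apply] using
      hunit.map Φ
end
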